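/- arXiv:2107.04380 — 3 statements merged into one kernel-verified Lean document; each statement's English description precedes it below -/
import Mathlib

section
/- Let C ⊆ ℝ be a finite nonempty codebook and w ∈ ℝⁿ. Define q* ∈ Cⁿ by q*_i = an element of C closest to w_i, and let s* ∈ ℝⁿ be obtained by keeping the κ largest-magnitude entries of w − q* and zeroing the rest. Then (q*, s*) minimizes Σ_i (w_i − (q_i + s_i))² over all q ∈ Cⁿ and s ∈ ℝⁿ with ‖s‖₀ ≤ κ. -/
/-!
Once the support `S` of `s` is fixed, the objective separates over coordinates: indices in `S`
contribute nothing for the best `s`, and each index outside `S` contributes at least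
`(w i - q*_i)²` because `q*_i` is a closest codeword. So every feasible pair costs at least
`∑_{i ∉ S} (w i - q*_i)²`, which is smallest when `S` collects the `κ` largest residuals;
`(q*, s*)` attains exactly this bound for `S = N`.
-/

/-- Number of nonzero entries of a vector (the ℓ₀ "norm"). -/
noncomputable def norm0 {n : ℕ} (s : Fin n → ℝ) : ℕ :=
  (Finset.univ.filter (fun i => s i ≠ 0)).card

open Finset

section TopSum

variable {ι M : Type*} [AddCommMonoid M] [LinearOrder M] [IsOrderedAddMonoid M]

lemma Finset.sum_le_sum_of_card_le_of_forall_le {s t : Finset ι} {f : ι → M}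
    (hcard : #s ≤ #t) (hle : ∀ i ∈ s, ∀ j ∈ t, f i ≤ f j) (hnonneg : ∀ j ∈ t, 0 ≤ f j) :
    ∑ i ∈ s, f i ≤ ∑ j ∈ t, f j := by
  rcases t.eq_empty_or_nonempty with rfl | ht
  · simp_all
  obtain ⟨m, hm, hmin⟩ := t.exists_min_image f ht
  calc ∑ i ∈ s, f i ≤ #s • f m := sum_le_card_nsmul s f (f m) fun i hi => hle i hi m hm
    _ ≤ #t • f m := nsmul_le_nsmul_left (hnonneg m hm) hcard
    _ ≤ ∑ j ∈ t, f j := card_nsmul_le_sum t f (f m) hmin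

lemma Finset.sum_le_sum_of_forall_le_of_card_le [DecidableEq ι] {N S : Finset ι} {f : ι → M}
    (hf : ∀ i, 0 ≤ f i) (hN : ∀ i ∈ N, ∀ j ∉ N, f j ≤ f i) (hcard : #S ≤ #N) :
    ∑ i ∈ S, f i ≤ ∑ i ∈ N, f i := by
  rw [← sum_inter_add_sum_sdiff S N, ← sum_inter_add_sum_sdiff N S, inter_comm]
  gcongr 1
  refine sum_le_sum_of_card_le_of_forall_le (card_sdiff_le_card_sdiff_iff.mpr hcard) ?_
    fun j _ => hf j
  intro i hi j hj
  exact hN j (mem_sdiff.mp hj).1 i (mem_sdiff.mp hi).2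

end TopSum

lemma norm0_le_card_of_eq_zero {n : ℕ} {s : Fin n → ℝ} {N : Finset (Fin n)}
    (hs : ∀ i ∉ N, s i = 0) : norm0 s ≤ #N :=
  card_le_card fun i hi => by
    by_contra hiN
    exact (mem_filter.mp hi).2 (hs i hiN)

lemma sum_compl_support_sq_le_of_closest {ι : Type*} [Fintype ι] [DecidableEq ι] (C : Finset ℝ)
    (w r q s : ι → ℝ)
    (hr : ∀ i, ∀ c ∈ C, |r i| ≤ |w i - c|) (hq : ∀ i, q i ∈ C) :
    ∑ i ∈ (univ.filter fun i => s i ≠ 0)ᶜ, r i ^ 2 ≤ ∑ i, (w i - (q i + s i)) ^ 2 := by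
  refine (sum_le_sum fun i hi => ?_).trans
    (sum_le_sum_of_subset_of_nonneg (subset_univ _) fun i _ _ => sq_nonneg _)
  have hsi : s i = 0 := by simpa using hi
  rw [hsi, add_zero]
  exact sq_le_sq.mpr (hr i (q i) (hq i))

theorem stmt_0_general {n : ℕ} (C : Finset ℝ) (w : Fin n → ℝ) (κ : ℕ)
    (qstar : Fin n → ℝ)
    (hq_closest : ∀ i, ∀ c ∈ C, |w i - qstar i| ≤ |w i - c|)
    (N : Finset (Fin n)) (hN : N.card = κ)
    (hN_largest : ∀ i ∈ N, ∀ j ∉ N, |w j - qstar j| ≤ |w i - qstar i|)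
    (sstar : Fin n → ℝ)
    (hsstar : ∀ i, sstar i = if i ∈ N then w i - qstar i else 0) :
    norm0 sstar ≤ κ ∧
    ∀ q s : Fin n → ℝ, (∀ i, q i ∈ C) → norm0 s ≤ κ →
      ∑ i, (w i - (qstar i + sstar i))^2 ≤ ∑ i, (w i - (q i + s i))^2 := by
  set r : Fin n → ℝ := fun i => w i - qstar i
  refine ⟨hN ▸ norm0_le_card_of_eq_zero fun i hi => by simp [hsstar, hi], ?_⟩
  intro q s hq hs
  set S := univ.filter fun i => s i ≠ 0
  have hstar : ∑ i, (w i - (qstar i + sstar i)) ^ 2 = ∑ i ∈ Nᶜ, r i ^ 2 := by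
    have hN_zero : ∑ i ∈ N, (w i - (qstar i + sstar i)) ^ 2 = 0 :=
      sum_eq_zero fun i hi => by simp [hsstar, hi]
    rw [← sum_compl_add_sum N, hN_zero, add_zero]
    exact sum_congr rfl fun i hi => by simp [hsstar, mem_compl.mp hi, r]
  have htop : ∑ i ∈ S, r i ^ 2 ≤ ∑ i ∈ N, r i ^ 2 :=
    sum_le_sum_of_forall_le_of_card_le (fun i => sq_nonneg (r i))
      (fun i hi j hj => sq_le_sq.mpr (hN_largest i hi j hj)) (hN ▸ hs)
  have hlower : ∑ i ∈ Sᶜ, r i ^ 2 ≤ ∑ i, (w i - (q i + s i)) ^ 2 :=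
    sum_compl_support_sq_le_of_closest C w r q s hq_closest hq
  linarith [sum_compl_add_sum N fun i => r i ^ 2, sum_compl_add_sum S fun i => r i ^ 2]

/-- Theorem 1 (exactly solvable C step for fixed-codebook quantization + sparse
corrections): taking `qstar i` a closest codebook element to `w i`, and `sstar`
keeping the κ largest-magnitude residuals `w i - qstar i` (on an index set `N`)
and zeroing the rest, gives an optimal solution of
`min Σ (w i - (q i + s i))²` over `q ∈ Cⁿ`, `‖s‖₀ ≤ κ`. -/
theorem stmt_0 {n : ℕ} (C : Finset ℝ) (hC : C.Nonempty) (w : Fin n → ℝ) (κ : ℕ)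
    (qstar : Fin n → ℝ)
    (hq_mem : ∀ i, qstar i ∈ C)
    (hq_closest : ∀ i, ∀ c ∈ C, |w i - qstar i| ≤ |w i - c|)
    (N : Finset (Fin n)) (hN : N.card = κ)
    (hN_largest : ∀ i ∈ N, ∀ j ∉ N, |w j - qstar j| ≤ |w i - qstar i|)
    (sstar : Fin n → ℝ)
    (hsstar : ∀ i, sstar i = if i ∈ N then w i - qstar i else 0) :
    norm0 sstar ≤ κ ∧
    ∀ q s : Fin n → ℝ, (∀ i, q i ∈ C) → norm0 s ≤ κ →
      ∑ i, (w i - (qstar i + sstar i))^2 ≤ ∑ i, (w i - (q i + s i))^2 :=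
  stmt_0_general C w κ qstar hq_closest N hN hN_largest sstar hsstar
end

section
/- Let f(q, s) = Σ_{i=1}^n (w_i − q_i − s_i)² for q ∈ Cⁿ (C ⊆ ℝ finite nonempty) and s ∈ ℝⁿ with ‖s‖₀ ≤ κ. Then the minimum value of f equals the sum of the n − κ smallest values among dist(w_i, C)², i = 1,…,n. -/
/-!
Only the coordinates outside the support of `s` pay a cost, and there the best quantizer value
costs exactly `dist(w i, C)²`. So the objective is at least the sum of `dist(w i, C)²` over the
complement of a set of at most `κ` indices, which is smallest when that set consists of the `κ`
largest distances; correcting those coordinates exactly by `s` attains the bound.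
-/

open Finset

namespace Finset

variable {ι M : Type*} [AddCommMonoid M] [LinearOrder M] [IsOrderedCancelAddMonoid M]
  {f : ι → M}

theorem sum_le_sum_of_card_le_of_forall_le_s9 {A B : Finset ι} (hcard : #A ≤ #B)
    (hAB : ∀ i ∈ A, ∀ j ∈ B, f i ≤ f j) (hf : ∀ j ∈ B, 0 ≤ f j) :
    ∑ i ∈ A, f i ≤ ∑ j ∈ B, f j := by
  rcases B.eq_empty_or_nonempty with rfl | hB
  · rw [card_eq_zero.mp (Nat.le_zero.mp hcard)]
  obtain ⟨m, hmB, hm⟩ := B.exists_min_image f hB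
  calc ∑ i ∈ A, f i ≤ #A • f m := A.sum_le_card_nsmul f _ fun i hi => hAB i hi m hmB
    _ ≤ #B • f m := nsmul_le_nsmul_left (hf m hmB) hcard
    _ ≤ ∑ j ∈ B, f j := B.card_nsmul_le_sum f _ hm

theorem sum_sdiff_le_sum_sdiff_of_forall_le [Fintype ι] [DecidableEq ι] {N S : Finset ι}
    (hS : #S ≤ #N) (hN : ∀ i ∈ N, ∀ j ∉ N, f j ≤ f i) (hf : ∀ i, 0 ≤ f i) :
    ∑ i ∈ univ \ N, f i ≤ ∑ i ∈ univ \ S, f i := by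
  rw [← sum_sdiff_le_sum_sdiff, sdiff_sdiff_sdiff_cancel_left (subset_univ S),
    sdiff_sdiff_sdiff_cancel_left (subset_univ N)]
  exact sum_le_sum_of_card_le_of_forall_le_s9 (card_sdiff_le_card_sdiff_iff.mpr hS)
    (fun i hi j hj => hN j (mem_sdiff.mp hj).1 i (mem_sdiff.mp hi).2) fun j _ => hf j

end Finset

theorem norm0_le_card_of_forall_notMem {n : ℕ} {s : Fin n → ℝ} {N : Finset (Fin n)}
    (h : ∀ i ∉ N, s i = 0) : norm0 s ≤ #N :=
  card_le_card fun i hi => by_contra fun hiN => (mem_filter.mp hi).2 (h i hiN)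

theorem stmt_9_general {n : ℕ} (C : Finset ℝ) (hC : C.Nonempty) (w : Fin n → ℝ)
    (κ : ℕ) (N : Finset (Fin n)) (hN : N.card = κ)
    (hN_largest : ∀ i ∈ N, ∀ j ∉ N,
      C.inf' hC (fun c => |w j - c|) ≤ C.inf' hC (fun c => |w i - c|)) :
    IsLeast {v : ℝ | ∃ q s : Fin n → ℝ, (∀ i, q i ∈ C) ∧ norm0 s ≤ κ ∧
        v = ∑ i, (w i - q i - s i)^2}
      (∑ i ∈ Finset.univ \ N, (C.inf' hC (fun c => |w i - c|))^2) := by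
  set d : Fin n → ℝ := fun i => C.inf' hC (fun c => |w i - c|)
  have hd0 : ∀ i, 0 ≤ d i := fun i => le_inf' hC _ fun c _ => abs_nonneg _
  constructor
  · choose q hqC hqd using fun i => exists_mem_eq_inf' hC (fun c => |w i - c|)
    refine ⟨q, fun i => if i ∈ N then w i - q i else 0, hqC,
      hN ▸ norm0_le_card_of_forall_notMem fun i hi => if_neg hi, ?_⟩
    have hcorrected : ∑ i ∈ N, (w i - q i - if i ∈ N then w i - q i else 0) ^ 2 = 0 :=
      sum_eq_zero fun i hi => by simp [hi]
    rw [← sum_sdiff (subset_univ N), hcorrected, add_zero]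
    refine sum_congr rfl fun i hi => ?_
    simp [(mem_sdiff.mp hi).2, hqd i, sq_abs]
  · rintro v ⟨q, s, hqC, hs, rfl⟩
    calc ∑ i ∈ univ \ N, d i ^ 2
        ≤ ∑ i ∈ univ \ univ.filter (s · ≠ 0), d i ^ 2 :=
          sum_sdiff_le_sum_sdiff_of_forall_le (hN ▸ hs)
            (fun i hi j hj => pow_le_pow_left₀ (hd0 j) (hN_largest i hi j hj) 2)
            fun i => sq_nonneg _
      _ ≤ ∑ i ∈ univ \ univ.filter (s · ≠ 0), (w i - q i - s i) ^ 2 := by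
          refine sum_le_sum fun i hi => ?_
          have hsi : s i = 0 := by simpa using (mem_sdiff.mp hi).2
          rw [hsi, sub_zero, ← sq_abs (w i - q i)]
          exact pow_le_pow_left₀ (hd0 i) (inf'_le _ (hqC i)) 2
      _ ≤ ∑ i, (w i - q i - s i) ^ 2 :=
          sum_le_sum_of_subset_of_nonneg sdiff_subset fun i _ _ => sq_nonneg _

/-- The optimal objective value of the quantization-plus-sparse-corrections
compression step equals the sum of the `n - κ` smallest values among
`dist(w i, C)²` (here `N` is a set of indices of κ largest distances). -/
theorem stmt_9 {n : ℕ} (C : Finset ℝ) (hC : C.Nonempty) (w : Fin n → ℝ)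
    (κ : ℕ) (hκ : κ ≤ n) (N : Finset (Fin n)) (hN : N.card = κ)
    (hN_largest : ∀ i ∈ N, ∀ j ∉ N,
      C.inf' hC (fun c => |w j - c|) ≤ C.inf' hC (fun c => |w i - c|)) :
    IsLeast {v : ℝ | ∃ q s : Fin n → ℝ, (∀ i, q i ∈ C) ∧ norm0 s ≤ κ ∧
        v = ∑ i, (w i - q i - s i)^2}
      (∑ i ∈ Finset.univ \ N, (C.inf' hC (fun c => |w i - c|))^2) :=
  stmt_9_general C hC w κ N hN hN_largest
end

section
/- Let C ⊆ ℝ be finite nonempty, w ∈ ℝⁿ, and κ ≤ n. Then m(κ) from the quantization-plus-corrections problem satisfies m(κ) = Σ_{i=1}^{n} d_{(i)}² − Σ_{i=n−κ+1}^{n} d_{(i)}², where d_i = dist(w_i, C) and d_{(1)} ≤ ⋯ ≤ d_{(n)} is the sorted sequence of the d_i. -/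
open Finset

namespace Finset

/-- Exchange argument: trading the elements of `A \ T` for those of `T \ A` never decreases the
sum, since there are at least as many of the latter and each is at least as large. -/
theorem sum_le_sum_of_card_le_of_forall_notMem_le {ι M : Type*} [DecidableEq ι]
    [AddCommMonoid M] [LinearOrder M] [IsOrderedAddMonoid M] {A T : Finset ι} {f : ι → M}
    (hcard : #A ≤ #T) (hT : ∀ b ∈ T, 0 ≤ f b) (hle : ∀ a ∉ T, ∀ b ∈ T, f a ≤ f b) :
    ∑ i ∈ A, f i ≤ ∑ i ∈ T, f i := by
  rw [← sum_inter_add_sum_sdiff A T, ← sum_inter_add_sum_sdiff T A, inter_comm T A]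
  refine add_le_add le_rfl ?_
  have hcard' : #(A \ T) ≤ #(T \ A) := by
    have := card_sdiff_add_card_inter A T
    have := card_sdiff_add_card_inter T A
    rw [inter_comm T A] at *
    omega
  rcases (T \ A).eq_empty_or_nonempty with hTA | hTA
  · rw [hTA, card_empty, Nat.le_zero, card_eq_zero] at hcard'
    simp [hcard', hTA]
  set c := (T \ A).inf' hTA f
  calc ∑ i ∈ A \ T, f i ≤ #(A \ T) • c :=
        sum_le_card_nsmul _ _ _ fun a ha => le_inf' hTA f fun b hb =>
          hle a (mem_sdiff.1 ha).2 b (mem_sdiff.1 hb).1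
    _ ≤ #(T \ A) • c :=
        nsmul_le_nsmul_left (le_inf' hTA f fun b hb => hT b (mem_sdiff.1 hb).1) hcard'
    _ ≤ ∑ i ∈ T \ A, f i := card_nsmul_le_sum _ _ _ fun b hb => inf'_le f hb

end Finset

/-- The indices of the `κ` largest entries of a vector sorted increasingly by `σ`. -/
def topIndices {n : ℕ} (σ : Equiv.Perm (Fin n)) (κ : ℕ) : Finset (Fin n) :=
  (univ.filter fun j : Fin n => n - κ ≤ (j : ℕ)).map σ.toEmbedding

section topIndices

variable {n : ℕ} (σ : Equiv.Perm (Fin n)) (κ : ℕ)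

theorem card_topIndices (hκ : κ ≤ n) : #(topIndices σ κ) = κ := by
  have h := card_filter_add_card_filter_not (s := univ) fun j : Fin n => (j : ℕ) < n - κ
  simp only [Fin.card_filter_val_lt, not_lt, card_univ, Fintype.card_fin] at h
  rw [topIndices, card_map]
  omega

theorem sum_topIndices {M : Type*} [AddCommMonoid M] (f : Fin n → M) :
    ∑ i ∈ topIndices σ κ, f i = ∑ j ∈ univ.filter fun j : Fin n => n - κ ≤ (j : ℕ), f (σ j) :=
  sum_map _ _ _

variable {σ κ}

theorem apply_le_of_notMem_topIndices {α : Type*} [Preorder α] {f : Fin n → α}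
    (hf : Monotone (f ∘ σ)) {a b : Fin n} (ha : a ∉ topIndices σ κ) (hb : b ∈ topIndices σ κ) :
    f a ≤ f b := by
  obtain ⟨j, hj, rfl⟩ := mem_map.1 hb
  have ha' : (σ.symm a : ℕ) < n - κ := not_le.1 fun h =>
    ha (mem_map.2 ⟨σ.symm a, mem_filter.2 ⟨mem_univ _, h⟩, σ.apply_symm_apply a⟩)
  simpa using hf (Fin.le_def.2 (ha'.le.trans (mem_filter.1 hj).2))

end topIndices

theorem norm0_ite_mem_le {n : ℕ} (T : Finset (Fin n)) (x : Fin n → ℝ) :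
    norm0 (fun i => if i ∈ T then x i else 0) ≤ #T :=
  card_le_card fun i hi => by
    by_contra hiT
    simp [hiT] at hi

theorem sum_sq_sub_ite_mem {ι R : Type*} [Fintype ι] [DecidableEq ι] [CommRing R]
    (T : Finset ι) (x : ι → R) :
    ∑ i, (x i - if i ∈ T then x i else 0) ^ 2 = ∑ i, x i ^ 2 - ∑ i ∈ T, x i ^ 2 := by
  have hterm (i : ι) : (x i - if i ∈ T then x i else 0) ^ 2 = x i ^ 2 - if i ∈ T then x i ^ 2 else 0 := by
    split_ifs <;> ring
  rw [sum_congr rfl fun i _ => hterm i, sum_sub_distrib, sum_ite_mem, univ_inter]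

theorem sum_sq_le_sum_sq_sub_of_le_abs {ι : Type*} [Fintype ι] {d x s : ι → ℝ}
    (hd : ∀ i, 0 ≤ d i) (hdx : ∀ i, d i ≤ |x i|) :
    ∑ i with s i = 0, d i ^ 2 ≤ ∑ i, (x i - s i) ^ 2 :=
  calc ∑ i with s i = 0, d i ^ 2 ≤ ∑ i with s i = 0, (x i - s i) ^ 2 :=
        sum_le_sum fun i hi => by
          rw [(mem_filter.1 hi).2, sub_zero, ← sq_abs (x i)]
          exact pow_le_pow_left₀ (hd i) (hdx i) 2
    _ ≤ ∑ i, (x i - s i) ^ 2 :=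
        sum_le_sum_of_subset_of_nonneg (filter_subset _ _) fun i _ _ => sq_nonneg _

/-- The minimum value of the quantization-plus-corrections problem with budget
κ equals `Σ_i d_(i)² - Σ_{i=n-κ+1}^{n} d_(i)²`, where `d i = dist(w i, C)` and
`d_(1) ≤ ⋯ ≤ d_(n)` is the sorted sequence (given by a sorting permutation σ):
the objective drops by the sum of the κ largest squared residuals. -/
theorem stmt_14 {n : ℕ} (C : Finset ℝ) (hC : C.Nonempty) (w : Fin n → ℝ)
    (κ : ℕ) (hκ : κ ≤ n) (d : Fin n → ℝ)
    (hd : ∀ i, d i = C.inf' hC (fun c => |w i - c|))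
    (σ : Equiv.Perm (Fin n)) (hσ : Monotone (fun i => d (σ i))) :
    IsLeast {v : ℝ | ∃ q s : Fin n → ℝ, (∀ i, q i ∈ C) ∧ norm0 s ≤ κ ∧
        v = ∑ i, (w i - q i - s i)^2}
      ((∑ i, (d i)^2) -
        ∑ i ∈ Finset.univ.filter (fun i : Fin n => n - κ ≤ (i : ℕ)),
          (d (σ i))^2) := by
  have hd0 (i : Fin n) : 0 ≤ d i := hd i ▸ le_inf' hC _ fun c _ => abs_nonneg _
  have hnearest (i : Fin n) : ∃ c ∈ C, d i = |w i - c| := by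
    obtain ⟨c, hc, hce⟩ := exists_mem_eq_inf' hC fun c => |w i - c|
    exact ⟨c, hc, (hd i).trans hce⟩
  choose q hqC hqd using hnearest
  rw [← sum_topIndices σ κ fun i => d i ^ 2]
  set T := topIndices σ κ
  have hTcard : #T = κ := card_topIndices σ κ hκ
  have hTtop : ∀ a ∉ T, ∀ b ∈ T, d a ^ 2 ≤ d b ^ 2 := fun a ha b hb =>
    pow_le_pow_left₀ (hd0 a) (apply_le_of_notMem_topIndices hσ ha hb) 2
  refine ⟨⟨q, fun i => if i ∈ T then w i - q i else 0, hqC, hTcard ▸ norm0_ite_mem_le T _, ?_⟩, ?_⟩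
  · rw [sum_sq_sub_ite_mem T fun i => w i - q i]
    simp only [hqd, sq_abs]
  · rintro v ⟨q', s, hq'C, hs, rfl⟩
    have hsupp : ∑ i with s i ≠ 0, d i ^ 2 ≤ ∑ i ∈ T, d i ^ 2 :=
      sum_le_sum_of_card_le_of_forall_notMem_le (hs.trans hTcard.ge) (fun _ _ => sq_nonneg _) hTtop
    have hrest := sum_sq_le_sum_sq_sub_of_le_abs (s := s) hd0 fun i => hd i ▸ inf'_le _ (hq'C i)
    have hsplit := sum_filter_add_sum_filter_not univ (fun i => s i = 0) fun i => d i ^ 2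
    linarith
end
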